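/- Set ξ₀ = b + (Γ₁ − (b+2a)²)/(b + 2a − Γ₂) and ξ_cr = b + (1 − Γ₁)/(1 + Γ₂), and for ξ ∈ ℝ set D(ξ) = (b − ξ)² + 4(Γ₁ + (ξ − b)Γ₂), μ₋(ξ) = (b − ξ − √D(ξ))/2, μ₊(ξ) = (b − ξ + √D(ξ))/2. Suppose ξ_cr < ξ < ξ' < ξ₀, and suppose μ₀, μ₀' ∈ (b+2a, −1) satisfy μ₋(ξ) < μ₀ < μ₊(ξ), μ₋(ξ') < μ₀' < μ₊(ξ'), ∫_{μ₀}^{−1} (λ − μ₋(ξ))(λ − μ₊(ξ))·w(λ) dλ = 0 and ∫_{μ₀'}^{−1} (λ − μ₋(ξ'))(λ − μ₊(ξ'))·w(λ) dλ = 0. Then μ₀' < μ₀; that is, the implicitly defined crossing point μ₀(ξ) is a strictly decreasing function of ξ on (ξ_cr, ξ₀). -/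

import Mathlib

/-!
By the definition of `D`, `q_t(x) := (x - μ₋(t))(x - μ₊(t)) = x² - Γ₁ + (t - b)(x - Γ₂)`, so
`q_ξ' - q_ξ = (ξ' - ξ)(x - Γ₂)`. As `Γ₂` is the `w`-mean of the gap, every tail integral
`∫_c^{-1} (x - Γ₂) w` is positive, whence `∫_{μ₀'}^{-1} q_ξ w < 0 < ∫_{μ₀}^{-1} q_ξ' w`.
If `μ₀ ≤ μ₀'`, both `q_ξ w` and `q_ξ' w` therefore have positive integral over `[μ₀, μ₀']`;
since `q_t ≤ 0` between its roots, this forces `μ₊(ξ) < μ₀'` and `μ₀ < μ₋(ξ')`. Adding up,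
`μ₋(ξ) + μ₊(ξ) < μ₋(ξ') + μ₊(ξ')`, i.e. `b - ξ < b - ξ'`, contradicting `ξ < ξ'`.
-/

open MeasureTheory

/-- The weight `w(λ) = ((λ² − 1)((λ − b)² − 4a²))^(−1/2)` on the spectral gap. -/
noncomputable def todaWeight (a b : ℝ) : ℝ → ℝ :=
  fun x => ((x^2 - 1) * ((x - b)^2 - 4*a^2)) ^ ((-1 : ℝ)/2)

/-- `Γ₁`, the normalized second weighted moment of the gap. -/
noncomputable def Gamma1 (a b : ℝ) : ℝ :=
  (∫ x in (b + 2*a)..(-1), x^2 * todaWeight a b x) /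
    (∫ x in (b + 2*a)..(-1), todaWeight a b x)

/-- `Γ₂`, the normalized first weighted moment of the gap. -/
noncomputable def Gamma2 (a b : ℝ) : ℝ :=
  (∫ x in (b + 2*a)..(-1), x * todaWeight a b x) /
    (∫ x in (b + 2*a)..(-1), todaWeight a b x)

/-- The discriminant `D(ξ)`. -/
noncomputable def discrD (a b ξ : ℝ) : ℝ :=
  (b - ξ)^2 + 4*(Gamma1 a b + (ξ - b) * Gamma2 a b)

/-- The smaller root `μ₋(ξ)`. -/
noncomputable def muMinus (a b ξ : ℝ) : ℝ :=
  (b - ξ - Real.sqrt (discrD a b ξ))/2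

/-- The larger root `μ₊(ξ)`. -/
noncomputable def muPlus (a b ξ : ℝ) : ℝ :=
  (b - ξ + Real.sqrt (discrD a b ξ))/2

open Set

section WeightedIntegrals

variable {w : ℝ → ℝ} {L R : ℝ}

theorem intervalIntegrable_sub_mul_sub_mul (hw : IntervalIntegrable w volume L R)
    (hw1 : IntervalIntegrable (fun x => x * w x) volume L R)
    (hw2 : IntervalIntegrable (fun x => x ^ 2 * w x) volume L R) (r s : ℝ) :
    IntervalIntegrable (fun x => (x - r) * (x - s) * w x) volume L R := by
  have h := (hw2.sub (hw1.const_mul (r + s))).add (hw.const_mul (r * s))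
  convert h using 1
  funext x
  ring

theorem integral_sub_div_mul_eq_zero (hw : IntervalIntegrable w volume L R)
    (hw1 : IntervalIntegrable (fun x => x * w x) volume L R) (h : ∫ x in L..R, w x ≠ 0) :
    ∫ x in L..R, (x - (∫ x in L..R, x * w x) / ∫ x in L..R, w x) * w x = 0 := by
  simp only [sub_mul]
  rw [intervalIntegral.integral_sub hw1 (hw.const_mul _), intervalIntegral.integral_const_mul]
  field_simp
  ring

theorem integral_sub_mul_pos_of_integral_eq_zero {m c : ℝ}
    (hw : IntervalIntegrable (fun x => (x - m) * w x) volume L R)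
    (hpos : ∀ x ∈ Ioo L R, 0 < w x) (hzero : ∫ x in L..R, (x - m) * w x = 0)
    (hc : c ∈ Ioo L R) : 0 < ∫ x in c..R, (x - m) * w x := by
  have hLc : IntervalIntegrable (fun x => (x - m) * w x) volume L c :=
    hw.mono_set (uIcc_subset_uIcc_left (Icc_subset_uIcc (Ioo_subset_Icc_self hc)))
  have hcR : IntervalIntegrable (fun x => (x - m) * w x) volume c R :=
    hw.mono_set (uIcc_subset_uIcc_right (Icc_subset_uIcc (Ioo_subset_Icc_self hc)))
  rcases le_or_gt m c with hmc | hcm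
  · refine intervalIntegral.intervalIntegral_pos_of_pos_on hcR (fun x hx => ?_) hc.2
    exact mul_pos (by linarith [hx.1]) (hpos x ⟨hc.1.trans hx.1, hx.2⟩)
  · have hneg : 0 < ∫ x in L..c, -((x - m) * w x) :=
      intervalIntegral.intervalIntegral_pos_of_pos_on hLc.neg (fun x hx => neg_pos.2 <|
        mul_neg_of_neg_of_pos (by linarith [hx.2]) (hpos x ⟨hx.1, hx.2.trans hc.2⟩)) hc.1
    rw [intervalIntegral.integral_neg] at hneg
    linarith [intervalIntegral.integral_add_adjacent_intervals hLc hcR]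

theorem integral_sub_mul_sub_mul_nonpos {r s c d : ℝ} (hcd : c ≤ d) (hr : r ≤ c) (hs : d ≤ s)
    (hw : ∀ x ∈ Icc c d, 0 ≤ w x) : ∫ x in c..d, (x - r) * (x - s) * w x ≤ 0 := by
  have h : 0 ≤ ∫ x in c..d, -((x - r) * (x - s) * w x) :=
    intervalIntegral.integral_nonneg hcd fun x hx => neg_nonneg.2 <|
      mul_nonpos_of_nonpos_of_nonneg
        (mul_nonpos_of_nonneg_of_nonpos (by linarith [hx.1]) (by linarith [hx.2])) (hw x hx)
  rwa [intervalIntegral.integral_neg, neg_nonneg] at h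

end WeightedIntegrals

theorem todaWeight_pos {a b x : ℝ} (ha : 0 < a) (hx : x ∈ Ioo (b + 2*a) (-1 : ℝ)) :
    0 < todaWeight a b x := by
  obtain ⟨hlo, hhi⟩ := hx
  have h1 : 0 < x^2 - 1 := by nlinarith
  have h2 : 0 < (x - b)^2 - 4*a^2 := by nlinarith
  exact Real.rpow_pos_of_pos (mul_pos h1 h2) _

theorem muMinus_add_muPlus (a b t : ℝ) : muMinus a b t + muPlus a b t = b - t := by
  rw [muMinus, muPlus]; ring

theorem discrD_nonneg_of_muMinus_lt_muPlus {a b t : ℝ} (h : muMinus a b t < muPlus a b t) :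
    0 ≤ discrD a b t := by
  by_contra! hD
  rw [muMinus, muPlus, Real.sqrt_eq_zero_of_nonpos hD.le] at h
  linarith

theorem sub_muMinus_mul_sub_muPlus {a b t : ℝ} (hD : 0 ≤ discrD a b t) (x : ℝ) :
    (x - muMinus a b t) * (x - muPlus a b t) = x^2 - Gamma1 a b + (t - b) * (x - Gamma2 a b) := by
  have hs := Real.sq_sqrt hD
  rw [discrD] at hs
  rw [muMinus, muPlus, discrD]
  linear_combination (-1/4 : ℝ) * hs

noncomputable def crossingIntegral (a b t c : ℝ) : ℝ :=
  ∫ x in c..(-1 : ℝ), (x - muMinus a b t) * (x - muPlus a b t) * todaWeight a b x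

section Crossing

variable {a b : ℝ}

theorem integral_sub_Gamma2_mul_todaWeight_pos (ha : 0 < a) (hgap : b + 2*a < -1)
    (hw : IntervalIntegrable (todaWeight a b) volume (b + 2*a) (-1))
    (hw1 : IntervalIntegrable (fun x => x * todaWeight a b x) volume (b + 2*a) (-1))
    {c : ℝ} (hc : c ∈ Ioo (b + 2*a) (-1 : ℝ)) :
    0 < ∫ x in c..(-1 : ℝ), (x - Gamma2 a b) * todaWeight a b x := by
  have hW : 0 < ∫ x in (b + 2*a)..(-1 : ℝ), todaWeight a b x :=
    intervalIntegral.intervalIntegral_pos_of_pos_on hw (fun x hx => todaWeight_pos ha hx) hgap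
  have hcentered : IntervalIntegrable (fun x => (x - Gamma2 a b) * todaWeight a b x)
      volume (b + 2*a) (-1) := by
    convert hw1.sub (hw.const_mul (Gamma2 a b)) using 1
    funext x
    ring
  exact integral_sub_mul_pos_of_integral_eq_zero hcentered (fun x hx => todaWeight_pos ha hx)
    (integral_sub_div_mul_eq_zero hw hw1 hW.ne') hc

theorem intervalIntegrable_crossing
    (hw : IntervalIntegrable (todaWeight a b) volume (b + 2*a) (-1))
    (hw1 : IntervalIntegrable (fun x => x * todaWeight a b x) volume (b + 2*a) (-1))
    (hw2 : IntervalIntegrable (fun x => x^2 * todaWeight a b x) volume (b + 2*a) (-1))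
    (t : ℝ) {c d : ℝ} (hc : c ∈ Icc (b + 2*a) (-1 : ℝ)) (hd : d ∈ Icc (b + 2*a) (-1 : ℝ)) :
    IntervalIntegrable (fun x => (x - muMinus a b t) * (x - muPlus a b t) * todaWeight a b x)
      volume c d :=
  (intervalIntegrable_sub_mul_sub_mul hw hw1 hw2 _ _).mono_set
    (uIcc_subset_uIcc (Icc_subset_uIcc hc) (Icc_subset_uIcc hd))

theorem crossingIntegral_sub_crossingIntegral
    (hw : IntervalIntegrable (todaWeight a b) volume (b + 2*a) (-1))
    (hw1 : IntervalIntegrable (fun x => x * todaWeight a b x) volume (b + 2*a) (-1))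
    (hw2 : IntervalIntegrable (fun x => x^2 * todaWeight a b x) volume (b + 2*a) (-1))
    {t t' c : ℝ} (hD : 0 ≤ discrD a b t) (hD' : 0 ≤ discrD a b t')
    (hc : c ∈ Icc (b + 2*a) (-1 : ℝ)) :
    crossingIntegral a b t' c - crossingIntegral a b t c
      = (t' - t) * ∫ x in c..(-1 : ℝ), (x - Gamma2 a b) * todaWeight a b x := by
  have hR : (-1 : ℝ) ∈ Icc (b + 2*a) (-1) := ⟨by linarith [hc.1, hc.2], le_rfl⟩
  rw [crossingIntegral, crossingIntegral, ← intervalIntegral.integral_sub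
    (intervalIntegrable_crossing hw hw1 hw2 t' hc hR)
    (intervalIntegrable_crossing hw hw1 hw2 t hc hR), ← intervalIntegral.integral_const_mul]
  congr 1
  funext x
  rw [sub_muMinus_mul_sub_muPlus hD, sub_muMinus_mul_sub_muPlus hD']
  ring

theorem lt_muMinus_or_muPlus_lt_of_crossingIntegral_lt (ha : 0 < a)
    (hw : IntervalIntegrable (todaWeight a b) volume (b + 2*a) (-1))
    (hw1 : IntervalIntegrable (fun x => x * todaWeight a b x) volume (b + 2*a) (-1))
    (hw2 : IntervalIntegrable (fun x => x^2 * todaWeight a b x) volume (b + 2*a) (-1))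
    {t c d : ℝ} (hc : c ∈ Ioo (b + 2*a) (-1 : ℝ)) (hd : d ∈ Ioo (b + 2*a) (-1 : ℝ))
    (hcd : c ≤ d) (h : crossingIntegral a b t d < crossingIntegral a b t c) :
    c < muMinus a b t ∨ muPlus a b t < d := by
  by_contra! hroots
  have hR : (-1 : ℝ) ∈ Icc (b + 2*a) (-1) := ⟨by linarith [hc.1, hc.2], le_rfl⟩
  have hsplit := intervalIntegral.integral_add_adjacent_intervals
    (intervalIntegrable_crossing hw hw1 hw2 t (Ioo_subset_Icc_self hc) (Ioo_subset_Icc_self hd))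
    (intervalIntegrable_crossing hw hw1 hw2 t (Ioo_subset_Icc_self hd) hR)
  have hnonpos := integral_sub_mul_sub_mul_nonpos hcd hroots.1 hroots.2
    (fun x hx => (todaWeight_pos ha ⟨hc.1.trans_le hx.1, hx.2.trans_lt hd.2⟩).le)
  rw [crossingIntegral, crossingIntegral] at h
  linarith

end Crossing

theorem crossing_point_strictly_decreasing_general
    (a b : ℝ) (ha : 0 < a) (hgap : b + 2*a < -1)
    (hw : IntervalIntegrable (todaWeight a b) volume (b + 2*a) (-1))
    (hw1 : IntervalIntegrable (fun x => x * todaWeight a b x) volume (b + 2*a) (-1))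
    (hw2 : IntervalIntegrable (fun x => x^2 * todaWeight a b x) volume (b + 2*a) (-1))
    (ξ ξ' μ₀ μ₀' : ℝ)
    (hξξ' : ξ < ξ')
    (hμ₀gap : μ₀ ∈ Set.Ioo (b + 2*a) (-1 : ℝ))
    (hμ₀'gap : μ₀' ∈ Set.Ioo (b + 2*a) (-1 : ℝ))
    (hμ₀l : muMinus a b ξ < μ₀) (hμ₀r : μ₀ < muPlus a b ξ)
    (hμ₀'l : muMinus a b ξ' < μ₀') (hμ₀'r : μ₀' < muPlus a b ξ')
    (hint : ∫ x in μ₀..(-1 : ℝ),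
      (x - muMinus a b ξ) * (x - muPlus a b ξ) * todaWeight a b x = 0)
    (hint' : ∫ x in μ₀'..(-1 : ℝ),
      (x - muMinus a b ξ') * (x - muPlus a b ξ') * todaWeight a b x = 0) :
    μ₀' < μ₀ := by
  have h₀ : crossingIntegral a b ξ μ₀ = 0 := hint
  have h₀' : crossingIntegral a b ξ' μ₀' = 0 := hint'
  have hD := discrD_nonneg_of_muMinus_lt_muPlus (hμ₀l.trans hμ₀r)
  have hD' := discrD_nonneg_of_muMinus_lt_muPlus (hμ₀'l.trans hμ₀'r)
  have hξ_at_μ₀' : crossingIntegral a b ξ μ₀' < 0 := by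
    have hdiff := crossingIntegral_sub_crossingIntegral hw hw1 hw2 hD hD'
      (Ioo_subset_Icc_self hμ₀'gap)
    have hpos := mul_pos (sub_pos.2 hξξ')
      (integral_sub_Gamma2_mul_todaWeight_pos ha hgap hw hw1 hμ₀'gap)
    linarith
  have hξ'_at_μ₀ : 0 < crossingIntegral a b ξ' μ₀ := by
    have hdiff := crossingIntegral_sub_crossingIntegral hw hw1 hw2 hD hD'
      (Ioo_subset_Icc_self hμ₀gap)
    have hpos := mul_pos (sub_pos.2 hξξ')
      (integral_sub_Gamma2_mul_todaWeight_pos ha hgap hw hw1 hμ₀gap)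
    linarith
  by_contra! hle
  obtain hlt | hξ_root := lt_muMinus_or_muPlus_lt_of_crossingIntegral_lt ha hw hw1 hw2
    hμ₀gap hμ₀'gap hle (hξ_at_μ₀'.trans_eq h₀.symm)
  · exact absurd hμ₀l hlt.not_gt
  obtain hξ'_root | hlt := lt_muMinus_or_muPlus_lt_of_crossingIntegral_lt ha hw hw1 hw2
    hμ₀gap hμ₀'gap hle (h₀'.trans_lt hξ'_at_μ₀)
  · linarith [muMinus_add_muPlus a b ξ, muMinus_add_muPlus a b ξ']
  · exact absurd hμ₀'r hlt.not_gt

/-- the implicitly defined crossing point `μ₀(ξ)` is strictly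
decreasing in `ξ` on `(ξ_cr, ξ₀)`. -/
theorem crossing_point_strictly_decreasing
    (a b : ℝ) (ha : 0 < a) (hgap : b + 2*a < -1)
    (hw : IntervalIntegrable (todaWeight a b) volume (b + 2*a) (-1))
    (hw1 : IntervalIntegrable (fun x => x * todaWeight a b x) volume (b + 2*a) (-1))
    (hw2 : IntervalIntegrable (fun x => x^2 * todaWeight a b x) volume (b + 2*a) (-1))
    (ξ ξ' μ₀ μ₀' : ℝ)
    (hξcr : b + (1 - Gamma1 a b)/(1 + Gamma2 a b) < ξ)
    (hξξ' : ξ < ξ')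
    (hξ₀ : ξ' < b + (Gamma1 a b - (b + 2*a)^2)/(b + 2*a - Gamma2 a b))
    (hμ₀gap : μ₀ ∈ Set.Ioo (b + 2*a) (-1 : ℝ))
    (hμ₀'gap : μ₀' ∈ Set.Ioo (b + 2*a) (-1 : ℝ))
    (hμ₀l : muMinus a b ξ < μ₀) (hμ₀r : μ₀ < muPlus a b ξ)
    (hμ₀'l : muMinus a b ξ' < μ₀') (hμ₀'r : μ₀' < muPlus a b ξ')
    (hint : ∫ x in μ₀..(-1 : ℝ),
      (x - muMinus a b ξ) * (x - muPlus a b ξ) * todaWeight a b x = 0)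
    (hint' : ∫ x in μ₀'..(-1 : ℝ),
      (x - muMinus a b ξ') * (x - muPlus a b ξ') * todaWeight a b x = 0) :
    μ₀' < μ₀ :=
  crossing_point_strictly_decreasing_general a b ha hgap hw hw1 hw2 ξ ξ' μ₀ μ₀' hξξ' hμ₀gap hμ₀'gap
    hμ₀l hμ₀r hμ₀'l hμ₀'r hint hint'
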